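/- arXiv:2411.16088 — 7 statements merged into one kernel-verified Lean document; each statement's English description precedes it below -/
import Mathlib

section
/- Let C(p) = S(Gp) − S(p) + E_p[f] where S is Shannon entropy, G a stochastic map on a finite set X, and f : X → ℝ. If q minimizes C over the probability simplex and q lies in the relative interior of the simplex, then for every distribution p, C(p) = D(p‖q) − D(Gp‖Gq) + C(q). -/
open Finset Real

def isDist {X : Type*} [Fintype X] (p : X → ℝ) : Prop :=
  (∀ x, 0 ≤ p x) ∧ ∑ x, p x = 1

def isStoch {X : Type*} [Fintype X] (G : X → X → ℝ) : Prop :=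
  (∀ y x, 0 ≤ G y x) ∧ ∀ x, ∑ y, G y x = 1

def push {X : Type*} [Fintype X] (G : X → X → ℝ) (p : X → ℝ) : X → ℝ :=
  fun y => ∑ x, G y x * p x

noncomputable def KL {X : Type*} [Fintype X] (p q : X → ℝ) : ℝ :=
  ∑ x, p x * Real.log (p x / q x)

noncomputable def Ent {X : Type*} [Fintype X] (p : X → ℝ) : ℝ :=
  -∑ x, p x * Real.log (p x)

noncomputable def cost {X : Type*} [Fintype X] (G : X → X → ℝ) (f : X → ℝ) (p : X → ℝ) : ℝ :=
  Ent (push G p) - Ent p + ∑ x, p x * f x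

/-! With the potential `φ = f + log q - Gᵀ (log Gq)`, expanding the logarithms gives
`C(p) - D(p‖q) + D(Gp‖Gq) = ∑ₓ p(x) φ(x)` for every `p`; the split of `D(Gp‖Gq)` is legitimate
because `q > 0` forces `Gp ≪ Gq`. The derivative of `t ↦ C(q + t c)` at `0` is `∑ₓ c(x) φ(x)`
(the `+1` terms of `d(u log u)` cancel since `G` preserves total mass), so the interior
minimality of `q`, tested along the segment towards `p`, gives `∑ₓ (p - q)(x) φ(x) = 0`.
Evaluating the identity at `p = q` then identifies `∑ₓ q(x) φ(x)` with `C(q)`. -/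

section

open Filter Topology

variable {X : Type*} [Fintype X]

lemma mul_log_div_eq_sub {a b : ℝ} (h : a = 0 ∨ b ≠ 0) :
    a * log (a / b) = a * log a - a * log b := by
  rcases eq_or_ne a 0 with rfl | ha
  · simp
  · rw [log_div ha (h.resolve_left ha), mul_sub]

lemma KL_eq_neg_Ent_sub {p q : X → ℝ} (h : ∀ x, p x = 0 ∨ q x ≠ 0) :
    KL p q = -Ent p - ∑ x, p x * log (q x) := by
  simp only [KL, Ent, neg_neg, ← sum_sub_distrib, mul_log_div_eq_sub (h _)]

lemma KL_self (p : X → ℝ) : KL p p = 0 := by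
  refine sum_eq_zero fun x _ => ?_
  rcases eq_or_ne (p x) 0 with h | h <;> simp [h]

lemma sum_push_mul (G : X → X → ℝ) (p g : X → ℝ) :
    ∑ y, push G p y * g y = ∑ x, p x * ∑ y, G y x * g y := by
  simp only [push, sum_mul, mul_sum]
  rw [sum_comm]
  exact sum_congr rfl fun _ _ => sum_congr rfl fun _ _ => by ring

lemma push_line (G : X → X → ℝ) (q c : X → ℝ) (t : ℝ) :
    push G (fun x => q x + t * c x) = fun y => push G q y + t * push G c y := by
  funext y
  simp only [push, mul_sum, ← sum_add_distrib]
  exact sum_congr rfl fun _ _ => by ring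

lemma push_eq_zero_of_push_eq_zero {G : X → X → ℝ} {q : X → ℝ} (hG : ∀ y x, 0 ≤ G y x)
    (hq : ∀ x, 0 < q x) (p : X → ℝ) {y : X} (hy : push G q y = 0) : push G p y = 0 := by
  have hGq := (sum_eq_zero_iff_of_nonneg fun x _ => mul_nonneg (hG y x) (hq x).le).1 hy
  refine sum_eq_zero fun x hx => ?_
  rw [(mul_eq_zero.1 (hGq x hx)).resolve_right (hq x).ne', zero_mul]

lemma hasDerivAt_mul_log_line {u : ℝ} (v : ℝ) (h : u ≠ 0 ∨ v = 0) :
    HasDerivAt (fun t => (u + t * v) * log (u + t * v)) (v * (log u + 1)) 0 := by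
  rcases h with hu | rfl
  · have hline : HasDerivAt (fun t : ℝ => u + t * v) v 0 := by
      simpa using ((hasDerivAt_id (0 : ℝ)).mul_const v).const_add u
    have hmul_log : HasDerivAt (fun x => x * log x) (log u + 1) (u + 0 * v) := by
      simpa using hasDerivAt_mul_log hu
    simpa [mul_comm, Function.comp_def] using hmul_log.comp 0 hline
  · simpa using hasDerivAt_const (0 : ℝ) (u * log u)

lemma hasDerivAt_Ent_line {u : X → ℝ} (v : X → ℝ) (h : ∀ x, u x ≠ 0 ∨ v x = 0) :
    HasDerivAt (fun t => Ent (fun x => u x + t * v x)) (-∑ x, v x * (log (u x) + 1)) 0 :=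
  (HasDerivAt.fun_sum fun x _ => hasDerivAt_mul_log_line (v x) (h x)).neg

noncomputable def mismatchPotential (G : X → X → ℝ) (f q : X → ℝ) (x : X) : ℝ :=
  f x + log (q x) - ∑ y, G y x * log (push G q y)

lemma cost_sub_KL_add_KL {G : X → X → ℝ} (f : X → ℝ) {q : X → ℝ} (hG : ∀ y x, 0 ≤ G y x)
    (hq : ∀ x, 0 < q x) (p : X → ℝ) :
    cost G f p - KL p q + KL (push G p) (push G q) = ∑ x, p x * mismatchPotential G f q x := by
  rw [KL_eq_neg_Ent_sub fun x => Or.inr (hq x).ne',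
    KL_eq_neg_Ent_sub fun y => (eq_or_ne _ 0).imp_left (push_eq_zero_of_push_eq_zero hG hq p),
    sum_push_mul]
  simp only [cost, mismatchPotential, mul_sub, mul_add, sum_sub_distrib, sum_add_distrib]
  ring

lemma hasDerivAt_cost_line {G : X → X → ℝ} (f : X → ℝ) {q : X → ℝ} (hG : isStoch G)
    (hq : ∀ x, 0 < q x) (c : X → ℝ) :
    HasDerivAt (fun t => cost G f (fun x => q x + t * c x))
      (∑ x, c x * mismatchPotential G f q x) 0 := by
  have hpush : ∀ y, push G q y ≠ 0 ∨ push G c y = 0 := fun y =>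
    (ne_or_eq _ 0).imp_right (push_eq_zero_of_push_eq_zero hG.1 hq c)
  have hlin : HasDerivAt (fun t => ∑ x, (q x + t * c x) * f x) (∑ x, c x * f x) 0 :=
    HasDerivAt.fun_sum fun x _ => by
      simpa using (((hasDerivAt_id (0 : ℝ)).mul_const (c x)).const_add (q x)).mul_const (f x)
  have hcost := ((hasDerivAt_Ent_line _ hpush).fun_sub
    (hasDerivAt_Ent_line c fun x => Or.inl (hq x).ne')).fun_add hlin
  simp only [cost, push_line]
  refine hcost.congr_deriv ?_
  have hmass : ∑ y, push G c y = ∑ x, c x := by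
    simpa [hG.2] using sum_push_mul G c 1
  have hlog := sum_push_mul G c fun y => log (push G q y)
  simp only [mismatchPotential, mul_add, mul_sub, mul_one, sum_add_distrib, sum_sub_distrib,
    hmass, hlog]
  ring

lemma eventually_isDist_line {q : X → ℝ} (hq : ∀ x, 0 < q x) (hmass : ∑ x, q x = 1)
    {c : X → ℝ} (hc : ∑ x, c x = 0) : ∀ᶠ t in 𝓝 (0 : ℝ), isDist (fun x => q x + t * c x) := by
  have hpos : ∀ᶠ t in 𝓝 (0 : ℝ), ∀ x, 0 < q x + t * c x := by
    refine eventually_all.2 fun x => ?_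
    have hcont : Continuous fun t : ℝ => q x + t * c x := by fun_prop
    exact hcont.continuousAt.eventually (lt_mem_nhds (by simpa using hq x))
  filter_upwards [hpos] with t ht
  refine ⟨fun x => (ht x).le, ?_⟩
  rw [sum_add_distrib, ← mul_sum, hmass, hc, mul_zero, add_zero]

lemma sum_sub_mul_mismatchPotential_eq_zero {G : X → X → ℝ} {f q : X → ℝ} (hG : isStoch G)
    (hqmass : ∑ x, q x = 1) (hqpos : ∀ x, 0 < q x)
    (hmin : ∀ r, isDist r → cost G f q ≤ cost G f r) {p : X → ℝ} (hp : ∑ x, p x = 1) :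
    ∑ x, (p x - q x) * mismatchPotential G f q x = 0 := by
  have hc : ∑ x, (p x - q x) = 0 := by rw [sum_sub_distrib, hp, hqmass, sub_self]
  have hloc : IsLocalMin (fun t => cost G f (fun x => q x + t * (p x - q x))) 0 := by
    filter_upwards [eventually_isDist_line hqpos hqmass hc] with t ht
    simpa using hmin _ ht
  exact hloc.hasDerivAt_eq_zero (hasDerivAt_cost_line f hG hqpos _)

end

/-- exact mismatch-cost decomposition when the prior `q` is an
interior minimizer of the cost over the simplex. -/
theorem mismatch_cost_decomposition_interior {X : Type*} [Fintype X]
    (G : X → X → ℝ) (f : X → ℝ) (q : X → ℝ)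
    (hG : isStoch G) (hq : isDist q)
    (hmin : ∀ r, isDist r → cost G f q ≤ cost G f r)
    (hqpos : ∀ x, 0 < q x) :
    ∀ p, isDist p →
      cost G f p = KL p q - KL (push G p) (push G q) + cost G f q := by
  intro p hp
  have hstationary := sum_sub_mul_mismatchPotential_eq_zero hG hq.2 hqpos hmin hp.2
  have hp_decomp := cost_sub_KL_add_KL f hG.1 hqpos p
  have hq_decomp := cost_sub_KL_add_KL f hG.1 hqpos q
  rw [KL_self, KL_self] at hq_decomp
  simp only [sub_mul, sum_sub_distrib] at hstationary
  linarith
end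

section
/- Let C(p) = S(Gp) − S(p) + E_p[f]. For any convex subset V of the probability simplex, any minimizer q of C over V, and any p ∈ V, one has C(p) − C(q) ≥ D(p‖q) − D(Gp‖Gq). -/
open Finset Real

/-!
Move from the minimizer `q` towards `p` along `r_t = q + t (p - q)`. Entropy increments along the
segment are exact: `S(q) - S(r_t) = t (S(q) - S(p) - D(p‖q)) + D(r_t‖q) + t log t · m`, where `m`
is the mass of `p` outside the support of `q`, and `-t m ≤ D(r_t‖q) ≤ -t m + O(t²)` by
`1 - 1/x ≤ log x ≤ x - 1`. Applying this to `(q, p)` and to `(Gq, Gp)`, the `t log t` terms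
combine with a nonpositive sign because `G` cannot move mass into the support of `Gq` from outside
that of `q`. Hence `0 ≤ C(r_t) - C(q) ≤ t Δ + O(t²)`, with `Δ` the difference of the two sides of
the claim, and `Δ ≥ 0` follows as `t → 0`.
-/

theorem mul_log_sub_mul_log_eq {a b t : ℝ} (ht : t ≠ 0) :
    (a + t * (b - a)) * log (a + t * (b - a)) - a * log a =
      t * (b * log b - a * log a - b * log (b / a))
        + (a + t * (b - a)) * log ((a + t * (b - a)) / a) + if a = 0 then t * log t * b else 0 := by
  rcases eq_or_ne a 0 with rfl | ha
  · rcases eq_or_ne b 0 with rfl | hb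
    · simp
    · simp [log_mul ht hb]; ring
  · have key (c : ℝ) : c * log c - c * log (c / a) = c * log a := by
      rcases eq_or_ne c 0 with rfl | hc
      · simp
      · rw [log_div hc ha]; ring
    rw [if_neg ha]
    linear_combination key (a + t * (b - a)) - t * key b

theorem mul_log_div_le {r a : ℝ} (hr : 0 ≤ r) (ha : 0 ≤ a) :
    r * log (r / a) ≤ (r - a) ^ 2 / a + if a = 0 then 0 else r - a := by
  rcases ha.eq_or_lt with rfl | ha
  · simp
  rw [if_neg ha.ne']
  rcases hr.eq_or_lt with rfl | hr
  · rw [zero_sub, neg_sq, sq, mul_self_div_self]; simp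
  calc r * log (r / a) ≤ r * (r / a - 1) :=
        mul_le_mul_of_nonneg_left (log_le_sub_one_of_pos (by positivity)) hr.le
    _ = (r - a) ^ 2 / a + (r - a) := by field_simp; ring

theorem le_mul_log_div {r a : ℝ} (hr : 0 ≤ r) (ha : 0 ≤ a) :
    (if a = 0 then 0 else r - a) ≤ r * log (r / a) := by
  rcases ha.eq_or_lt with rfl | ha
  · simp
  rw [if_neg ha.ne']
  rcases hr.eq_or_lt with rfl | hr
  · simpa using ha.le
  calc r - a = r * (1 - (r / a)⁻¹) := by field_simp
    _ ≤ r * log (r / a) :=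
        mul_le_mul_of_nonneg_left (one_sub_inv_le_log_of_pos (by positivity)) hr.le

section
variable {X : Type*} [Fintype X]

-- `KL b a` ignores this mass of `b`, since `log (b x / 0) = 0`.
noncomputable def offSupportMass (a b : X → ℝ) : ℝ :=
  ∑ x, if a x = 0 then b x else 0

theorem Ent_sub_Ent_add_smul_sub (a b : X → ℝ) {t : ℝ} (ht : t ≠ 0) :
    Ent a - Ent (a + t • (b - a)) =
      t * (Ent a - Ent b - KL b a) + KL (a + t • (b - a)) a + t * log t * offSupportMass a b := by
  simp only [Ent, KL, offSupportMass, Pi.add_apply, Pi.smul_apply, Pi.sub_apply, smul_eq_mul,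
    mul_sum, ← sum_sub_distrib, ← sum_add_distrib, sub_neg_eq_add, neg_add_eq_sub]
  refine sum_congr rfl fun x _ => ?_
  rw [mul_log_sub_mul_log_eq ht]
  split_ifs <;> ring

theorem sum_ite_ne_zero_mul_sub {a b : X → ℝ} (hab : ∑ x, a x = ∑ x, b x) (t : ℝ) :
    ∑ x, (if a x = 0 then 0 else t * (b x - a x)) = -t * offSupportMass a b := by
  have h (x : X) : (if a x = 0 then 0 else t * (b x - a x))
      = t * (b x - a x) - t * (if a x = 0 then b x else 0) := by
    split_ifs with h <;> simp [h]
  simp only [h, sum_sub_distrib, ← mul_sum, offSupportMass, hab, sub_self]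
  ring

theorem KL_add_smul_sub_le {a b : X → ℝ} (ha : isDist a) (hb : isDist b) {t : ℝ}
    (ht₀ : 0 ≤ t) (ht₁ : t ≤ 1) :
    KL (a + t • (b - a)) a ≤ -t * offSupportMass a b + t ^ 2 * ∑ x, (b x - a x) ^ 2 / a x := by
  rw [← sum_ite_ne_zero_mul_sub (ha.2.trans hb.2.symm), mul_sum, ← sum_add_distrib]
  refine sum_le_sum fun x _ => ?_
  have hr : 0 ≤ a x + t * (b x - a x) := by nlinarith [ha.1 x, hb.1 x]
  refine (mul_log_div_le hr (ha.1 x)).trans_eq ?_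
  split_ifs <;> ring

theorem neg_mul_offSupportMass_le_KL {a b : X → ℝ} (ha : isDist a) (hb : isDist b) {t : ℝ}
    (ht₀ : 0 ≤ t) (ht₁ : t ≤ 1) :
    -t * offSupportMass a b ≤ KL (a + t • (b - a)) a := by
  rw [← sum_ite_ne_zero_mul_sub (ha.2.trans hb.2.symm)]
  refine sum_le_sum fun x _ => ?_
  have hr : 0 ≤ a x + t * (b x - a x) := by nlinarith [ha.1 x, hb.1 x]
  refine le_of_eq_of_le ?_ (le_mul_log_div hr (ha.1 x))
  simp

theorem push_add_smul_sub (G : X → X → ℝ) (a b : X → ℝ) (t : ℝ) :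
    push G (a + t • (b - a)) = push G a + t • (push G b - push G a) := by
  funext y
  simp only [push, Pi.add_apply, Pi.smul_apply, Pi.sub_apply, smul_eq_mul, mul_sum,
    ← sum_sub_distrib, ← sum_add_distrib]
  exact sum_congr rfl fun x _ => by ring

theorem sum_push {G : X → X → ℝ} (hG : ∀ x, ∑ y, G y x = 1) (p : X → ℝ) :
    ∑ y, push G p y = ∑ x, p x := by
  simp only [push]
  rw [sum_comm]
  simp only [← sum_mul, hG, one_mul]

theorem push_nonneg {G : X → X → ℝ} (hG : ∀ y x, 0 ≤ G y x) {p : X → ℝ} (hp : ∀ x, 0 ≤ p x)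
    (y : X) : 0 ≤ push G p y :=
  sum_nonneg fun x _ => mul_nonneg (hG y x) (hp x)

theorem isDist_push {G : X → X → ℝ} (hG : isStoch G) {p : X → ℝ} (hp : isDist p) :
    isDist (push G p) :=
  ⟨push_nonneg hG.1 hp.1, (sum_push hG.2 p).trans hp.2⟩

theorem offSupportMass_push_le {G : X → X → ℝ} (hG : isStoch G) {q p : X → ℝ}
    (hq : ∀ x, 0 ≤ q x) (hp : ∀ x, 0 ≤ p x) :
    offSupportMass (push G q) (push G p) ≤ offSupportMass q p := by
  set u : X → ℝ := fun x => if q x = 0 then p x else 0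
  have hu : ∀ x, 0 ≤ u x := fun x => by dsimp only [u]; split_ifs <;> simp [hp x]
  calc offSupportMass (push G q) (push G p) ≤ ∑ y, push G u y := by
        refine sum_le_sum fun y _ => ?_
        split_ifs with hy
        · refine sum_le_sum fun x _ => ?_
          rcases eq_or_ne (q x) 0 with hx | hx
          · simp [u, hx]
          · have : G y x * q x = 0 :=
              (sum_eq_zero_iff_of_nonneg fun x _ => mul_nonneg (hG.1 y x) (hq x)).mp hy x
                (mem_univ x)
            simp [(mul_eq_zero.mp this).resolve_right hx]
        · exact push_nonneg hG.1 hu y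
    _ = offSupportMass q p := sum_push hG.2 u

theorem cost_add_smul_sub_sub_cost_le {G : X → X → ℝ} (hG : isStoch G)
    (f : X → ℝ) {q p : X → ℝ} (hq : isDist q) (hp : isDist p) {t : ℝ} (ht₀ : 0 < t) (ht₁ : t ≤ 1) :
    cost G f (q + t • (p - q)) - cost G f q ≤
      t * (cost G f p - cost G f q - (KL p q - KL (push G p) (push G q)))
        + t ^ 2 * ∑ x, (p x - q x) ^ 2 / q x := by
  have hq_ent := Ent_sub_Ent_add_smul_sub q p ht₀.ne'
  have hGq_ent := Ent_sub_Ent_add_smul_sub (push G q) (push G p) ht₀.ne'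
  have hKL_le := KL_add_smul_sub_le hq hp ht₀.le ht₁
  have hKL_ge := neg_mul_offSupportMass_le_KL (isDist_push hG hq) (isDist_push hG hp) ht₀.le ht₁
  -- the `t log t` terms dominate `t Δ` as `t → 0`; they survive only with this favourable sign
  have hmix : t * (log t - 1) * (offSupportMass q p - offSupportMass (push G q) (push G p)) ≤ 0 :=
    mul_nonpos_of_nonpos_of_nonneg
      (mul_nonpos_of_nonneg_of_nonpos ht₀.le (by linarith [log_nonpos ht₀.le ht₁]))
      (sub_nonneg.2 (offSupportMass_push_le hG hq.1 hp.1))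
  have hf : ∑ x, (q + t • (p - q)) x * f x =
      ∑ x, q x * f x + t * (∑ x, p x * f x - ∑ x, q x * f x) := by
    simp only [Pi.add_apply, Pi.smul_apply, Pi.sub_apply, smul_eq_mul, mul_sum,
      ← sum_sub_distrib, ← sum_add_distrib]
    exact sum_congr rfl fun x _ => by ring
  simp only [cost, push_add_smul_sub, hf]
  linarith

end

theorem nonneg_of_forall_nonneg_add_mul {c K : ℝ} (h : ∀ t ∈ Set.Ioc (0 : ℝ) 1, 0 ≤ c + t * K) :
    0 ≤ c := by
  have hlim : Filter.Tendsto (fun t : ℝ => c + t * K) (nhdsWithin 0 (Set.Ioi 0)) (nhds c) := by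
    have hcont : Continuous fun t : ℝ => c + t * K := by fun_prop
    simpa using (hcont.tendsto 0).mono_left nhdsWithin_le_nhds
  exact ge_of_tendsto hlim (Filter.mem_of_superset (Ioc_mem_nhdsGT zero_lt_one) h)

/-- for any convex subset `V` of the simplex, a minimizer `q` of the
cost over `V`, and any `p ∈ V`, the excess cost is at least the KL drop. -/
theorem mismatch_cost_lower_bound_convex {X : Type*} [Fintype X]
    (G : X → X → ℝ) (f : X → ℝ) (V : Set (X → ℝ))
    (hG : isStoch G) (hV : Convex ℝ V) (hVd : ∀ p ∈ V, isDist p)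
    (q : X → ℝ) (hqV : q ∈ V)
    (hmin : ∀ r ∈ V, cost G f q ≤ cost G f r)
    (p : X → ℝ) (hpV : p ∈ V) :
    KL p q - KL (push G p) (push G q) ≤ cost G f p - cost G f q := by
  rw [← sub_nonneg]
  refine nonneg_of_forall_nonneg_add_mul (K := ∑ x, (p x - q x) ^ 2 / q x) fun t ht => ?_
  have hmin_t := hmin _ (hV.add_smul_sub_mem hqV hpV ⟨ht.1.le, ht.2⟩)
  have hbound := cost_add_smul_sub_sub_cost_le hG f (hVd q hqV) (hVd p hpV) ht.1 ht.2
  refine (mul_nonneg_iff_of_pos_left ht.1).mp ?_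
  linear_combination hmin_t + hbound
end

section
/- Mismatch cost is superadditive under time coarse-graining: if C_{02}(p) = C_{01}(p) + C_{12}(Gp) where G is the stochastic map from time 0 to time 1, and MC denotes the mismatch cost of each cost function (cost minus its minimum over the simplex), then for all p, MC_{02}(p) ≤ MC_{01}(p) + MC_{12}(Gp). -/
open Finset Real

/-- mismatch cost is superadditive under time coarse-graining:
`MC_{02}(p) ≤ MC_{01}(p) + MC_{12}(G₁ p)`, where each mismatch cost is the
corresponding cost minus its minimum over the simplex. -/
theorem mismatch_cost_time_coarse_graining {X : Type*} [Fintype X]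
    (G₁ : X → X → ℝ) (hG₁ : isStoch G₁)
    (C01 C12 C02 : (X → ℝ) → ℝ)
    (hadd : ∀ p, isDist p → C02 p = C01 p + C12 (push G₁ p))
    (q01 q12 q02 : X → ℝ)
    (hq01 : isDist q01) (hq12 : isDist q12) (hq02 : isDist q02)
    (hmin01 : ∀ r, isDist r → C01 q01 ≤ C01 r)
    (hmin12 : ∀ r, isDist r → C12 q12 ≤ C12 r)
    (hmin02 : ∀ r, isDist r → C02 q02 ≤ C02 r)
    (p : X → ℝ) (hp : isDist p) :
    C02 p - C02 q02 ≤ (C01 p - C01 q01) + (C12 (push G₁ p) - C12 q12) := by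
  have hpush : isDist (push G₁ q02) := by
    constructor
    · intro y
      exact Finset.sum_nonneg fun x _ => mul_nonneg (hG₁.1 y x) (hq02.1 x)
    · unfold push
      rw [Finset.sum_comm]
      calc ∑ x, ∑ y, G₁ y x * q02 x = ∑ x, q02 x := by
            refine Finset.sum_congr rfl fun x _ => ?_
            rw [← Finset.sum_mul, hG₁.2 x, one_mul]
        _ = 1 := hq02.2
  have h1 : C01 q01 + C12 q12 ≤ C02 q02 := by
    rw [hadd q02 hq02]
    exact add_le_add (hmin01 q02 hq02) (hmin12 _ hpush)
  have h2 := hadd p hp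
  linarith
end

section
/- Any minimizer q of C(p) = S(Gp) − S(p) + E_p[f] over the interior of the probability simplex satisfies the fixed-point equation q(x) = e^{−λ − f(x)} Π_{x'} (Gq(x'))^{G(x'|x)}, where λ is a normalization constant; moreover −λ equals the minimal cost C(q). -/
open Finset Real

/-- a full-support critical point of the cost (i.e. one satisfying
the Lagrange condition) satisfies the fixed-point equation
`q(x) = e^{−λ−f(x)} Π_{x'} (Gq(x'))^{G(x'|x)}`, and `−λ` equals the minimal
cost `C(q)`. -/
theorem prior_fixed_point_equation {X : Type*} [Fintype X]
    (G : X → X → ℝ) (f : X → ℝ) (q : X → ℝ) (l : ℝ)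
    (hG : isStoch G) (hq : isDist q) (hqpos : ∀ x, 0 < q x)
    (hpush : ∀ y, 0 < push G q y)
    (hlagrange : ∀ x,
      Real.log (q x) + f x - (∑ x', G x' x * Real.log (push G q x')) + l = 0) :
    (∀ x, q x = Real.exp (-l - f x) * ∏ x', (push G q x') ^ (G x' x)) ∧
      -l = cost G f q := by
  constructor
  · intro x
    have h := hlagrange x
    have hlog : Real.log (q x) = (-l - f x) + ∑ x', G x' x * Real.log (push G q x') := by
      linarith
    have hprod : ∏ x', (push G q x') ^ (G x' x)
        = Real.exp (∑ x', G x' x * Real.log (push G q x')) := by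
      rw [Real.exp_sum]
      refine Finset.prod_congr rfl fun y _ => ?_
      rw [Real.rpow_def_of_pos (hpush y), mul_comm]
    rw [hprod, ← Real.exp_add, ← hlog, Real.exp_log (hqpos x)]
  · have hsum : ∑ x, q x * (Real.log (q x) + f x
        - (∑ x', G x' x * Real.log (push G q x')) + l) = 0 := by
      simp [hlagrange]
    have hdouble : ∑ x, q x * ∑ x', G x' x * Real.log (push G q x')
        = ∑ y, push G q y * Real.log (push G q y) := by
      simp_rw [Finset.mul_sum]
      rw [Finset.sum_comm]
      refine Finset.sum_congr rfl fun y _ => ?_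
      rw [push, Finset.sum_mul]
      refine Finset.sum_congr rfl fun x _ => by ring
    have hl : ∑ x, q x * l = l := by
      rw [← Finset.sum_mul, hq.2, one_mul]
    have : ∑ x, q x * Real.log (q x) + ∑ x, q x * f x
        - ∑ y, push G q y * Real.log (push G q y) + l = 0 := by
      have := hsum
      simp only [mul_add, mul_sub, Finset.sum_add_distrib, Finset.sum_sub_distrib] at this
      rw [hdouble, hl] at this
      linarith
    simp only [cost, Ent]
    linarith
end

section
/- For a cost function C(p) = S(Gp) − S(p) + E_p[f] with f finite everywhere, any minimizer of C over distributions supported in a single island c of G has full support on c. -/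
open Finset Real

/-- Two states are related iff they can both send probability to a common output. -/
def islandRel {X : Type*} [Fintype X] (G : X → X → ℝ) : X → X → Prop :=
  fun a b => ∃ y, 0 < G y a ∧ 0 < G y b

/-- `c` is an island of `G`: an equivalence class of the transitive (equivalence)
closure of `islandRel G`. -/
def IsIsland {X : Type*} [Fintype X] (G : X → X → ℝ) (c : Set X) : Prop :=
  ∃ x₀, c = {x | Relation.EqvGen (islandRel G) x x₀}

lemma sub_one_le_mul_log {x : ℝ} (hx : 0 ≤ x) : x - 1 ≤ x * Real.log x := by
  rcases eq_or_lt_of_le hx with h|h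
  · simp [← h]
  · have h1 := Real.log_le_sub_one_of_pos (show (0:ℝ) < x⁻¹ by positivity)
    rw [Real.log_inv] at h1
    nlinarith [mul_inv_cancel₀ (ne_of_gt h)]

lemma neg_mul_log_le {u v : ℝ} (hu : 0 < u) (hv : 0 ≤ v) :
    -(v * Real.log v) ≤ -(u * Real.log u) + (-Real.log u - 1) * (v - u) := by
  rcases eq_or_lt_of_le hv with h|h
  · rw [← h]; nlinarith []
  · have key := sub_one_le_mul_log (le_of_lt (div_pos h hu))
    rw [Real.log_div (ne_of_gt h) (ne_of_gt hu)] at key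
    have h2 := mul_le_mul_of_nonneg_left key (le_of_lt hu)
    have h3 : u * (v / u) = v := mul_div_cancel₀ v (ne_of_gt hu)
    nlinarith [h2]

lemma key_lemma {X : Type*} [Fintype X]
    (G : X → X → ℝ) (f : X → ℝ) (hG : isStoch G)
    (c : Set X)
    (q : X → ℝ) (hq : isDist q) (hsupp : ∀ x, q x ≠ 0 → x ∈ c)
    (hmin : ∀ r, isDist r → (∀ x, r x ≠ 0 → x ∈ c) → cost G f q ≤ cost G f r)
    (a : X) (hac : a ∈ c) (y0 : X) (hy1 : 0 < G y0 a) (hy2 : 0 < push G q y0) :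
    0 < q a := by
  classical
  by_contra hqa
  have ha0 : q a = 0 := le_antisymm (not_lt.mp hqa) (hq.1 a)
  set u : X → ℝ := push G q with hu_def
  have hu_nonneg : ∀ y, 0 ≤ u y := fun y =>
    Finset.sum_nonneg (fun x _ => mul_nonneg (hG.1 y x) (hq.1 x))
  set g : X → ℝ := fun y => G y a with hg_def
  have hg_nonneg : ∀ y, 0 ≤ g y := fun y => hG.1 y a
  set A : Finset X := Finset.univ.filter (fun y => u y = 0) with hA_def
  set α : ℝ := ∑ y ∈ A, g y with hα_def
  have hy0A : y0 ∉ A := by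
    rw [hA_def]
    simp only [Finset.mem_filter, Finset.mem_univ, true_and]
    exact ne_of_gt hy2
  have hα_lt : α < 1 := by
    have hsub : A ⊆ Finset.univ.erase y0 := by
      intro y hy
      exact Finset.mem_erase.mpr ⟨fun h => hy0A (h ▸ hy), Finset.mem_univ y⟩
    have h1 : α ≤ ∑ y ∈ Finset.univ.erase y0, g y :=
      Finset.sum_le_sum_of_subset_of_nonneg hsub (fun y _ _ => hg_nonneg y)
    have h2 : ∑ y ∈ Finset.univ.erase y0, g y + g y0 = ∑ y, g y :=
      Finset.sum_erase_add Finset.univ g (Finset.mem_univ y0)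
    have h3 : ∑ y, g y = 1 := hG.2 a
    have hgy0 : 0 < g y0 := hy1
    linarith
  set K : ℝ := ∑ y ∈ A, g y * Real.log (g y) with hK_def
  set B : Finset X := Finset.univ.filter (fun y => ¬ u y = 0) with hB_def
  set CB : ℝ := ∑ y ∈ B, (-Real.log (u y) - 1) * (g y - u y) with hCB_def
  set E : ℝ := ∑ x, q x * f x with hE_def
  set t : ℝ := min (1/2) (Real.exp (-((-K + CB + Ent q + f a - E)+1)/(1-α))) with ht_def
  have ht0 : 0 < t := lt_min (by norm_num) (Real.exp_pos _)
  have ht2 : t ≤ 1/2 := min_le_left _ _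
  have h1t : 0 < 1 - t := by linarith
  set r : X → ℝ := fun x => (1-t) * q x + t * (if x = a then 1 else 0) with hr_def
  -- r is a distribution supported in c
  have hr_nonneg : ∀ x, 0 ≤ r x := by
    intro x
    have h1 : (0:ℝ) ≤ (if x = a then (1:ℝ) else 0) := by positivity
    have h2 : 0 ≤ (1-t) * q x := mul_nonneg h1t.le (hq.1 x)
    have h3 : 0 ≤ t * (if x = a then (1:ℝ) else 0) := mul_nonneg ht0.le h1
    show 0 ≤ (1-t) * q x + t * (if x = a then 1 else 0)
    linarith
  have hr_dist : isDist r := by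
    refine ⟨hr_nonneg, ?_⟩
    rw [hr_def]
    rw [Finset.sum_add_distrib, ← Finset.mul_sum, ← Finset.mul_sum, hq.2]
    simp [Finset.sum_ite_eq', Finset.mem_univ]
  have hr_supp : ∀ x, r x ≠ 0 → x ∈ c := by
    intro x hx
    by_cases h : x = a
    · exact h ▸ hac
    · apply hsupp
      intro hqx
      apply hx
      rw [hr_def]
      simp [h, hqx]
  -- push of r
  have hpush_r : ∀ y, push G r y = (1-t) * u y + t * g y := by
    intro y
    show ∑ x, G y x * r x = _
    have : ∀ x ∈ Finset.univ, G y x * r x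
        = (1-t) * (G y x * q x) + t * (if x = a then G y x else 0) := by
      intro x _
      rw [hr_def]
      by_cases h : x = a <;> simp [h] <;> ring
    rw [Finset.sum_congr rfl this, Finset.sum_add_distrib, ← Finset.mul_sum, ← Finset.mul_sum,
      Finset.sum_ite_eq' Finset.univ a (fun x => G y x)]
    simp [hu_def, push, hg_def]
  -- entropy of r
  have hEntr : Ent r = -(t * Real.log t) - (1-t) * Real.log (1-t) + (1-t) * Ent q := by
    have hra : r a = t := by show (1-t) * q a + t * (if a = a then 1 else 0) = t; simp [ha0]
    have hterm : ∀ x ∈ Finset.univ.erase a, r x * Real.log (r x)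
        = Real.log (1-t) * ((1-t) * q x) + (1-t) * (q x * Real.log (q x)) := by
      intro x hx
      have hxa : x ≠ a := Finset.ne_of_mem_erase hx
      have hrx : r x = (1-t) * q x := by
        show (1-t) * q x + t * (if x = a then 1 else 0) = (1-t) * q x
        simp [hxa]
      rw [hrx]
      rcases eq_or_lt_of_le (hq.1 x) with h|h
      · simp [← h]
      · rw [Real.log_mul (ne_of_gt h1t) (ne_of_gt h)]; ring
    have hsum1 : ∑ x ∈ Finset.univ.erase a, q x = 1 := by
      have h1 := Finset.sum_erase_add Finset.univ q (Finset.mem_univ a)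
      rw [ha0] at h1
      rw [hq.2] at h1 -- careful
      linarith
    have hsum2 : ∑ x ∈ Finset.univ.erase a, q x * Real.log (q x)
        = ∑ x, q x * Real.log (q x) := by
      have h1 := Finset.sum_erase_add Finset.univ (fun x => q x * Real.log (q x))
        (Finset.mem_univ a)
      simp only [ha0, Real.log_zero, mul_zero, zero_mul, add_zero] at h1
      exact h1
    show -∑ x, r x * Real.log (r x) = _
    rw [← Finset.sum_erase_add Finset.univ _ (Finset.mem_univ a), hra,
      Finset.sum_congr rfl hterm, Finset.sum_add_distrib, ← Finset.mul_sum, ← Finset.mul_sum,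
      ← Finset.mul_sum, hsum1, hsum2]
    show _ = _ - _ + (1-t) * (-∑ x, q x * Real.log (q x))
    ring
  -- expectation of f under r
  have hrf : ∑ x, r x * f x = (1-t) * E + t * f a := by
    have hterm : ∀ x ∈ Finset.univ, r x * f x
        = (1-t) * (q x * f x) + t * (if x = a then f a else 0) := by
      intro x _
      show ((1-t) * q x + t * (if x = a then 1 else 0)) * f x = _
      by_cases h : x = a <;> simp [h] <;> ring
    rw [Finset.sum_congr rfl hterm, Finset.sum_add_distrib, ← Finset.mul_sum, ← Finset.mul_sum,
      Finset.sum_ite_eq' Finset.univ a (fun _ => f a)]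
    simp [hE_def]
  -- entropy of push r : the key upper bound
  have hEntpush : Ent (push G r) ≤ -(α * (t * Real.log t)) - t * K + Ent u + t * CB := by
    have hA_term : ∀ y ∈ A, push G r y * Real.log (push G r y)
        = t * Real.log t * g y + t * (g y * Real.log (g y)) := by
      intro y hy
      have hu0 : u y = 0 := by
        have := (Finset.mem_filter.mp (show y ∈ Finset.univ.filter (fun y => u y = 0) from hy)).2
        exact this
      rw [hpush_r y, hu0]
      rcases eq_or_lt_of_le (hg_nonneg y) with h|h
      · simp [← h]
      · rw [mul_zero, zero_add, Real.log_mul (ne_of_gt ht0) (ne_of_gt h)]; ring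
    have hB_term : ∀ y ∈ B, -(push G r y * Real.log (push G r y))
        ≤ -(u y * Real.log (u y)) + t * ((-Real.log (u y) - 1) * (g y - u y)) := by
      intro y hy
      have hu0 : 0 < u y := lt_of_le_of_ne (hu_nonneg y)
        (Ne.symm (Finset.mem_filter.mp (show y ∈ Finset.univ.filter (fun y => ¬ u y = 0) from hy)).2)
      have hv : 0 ≤ push G r y := by
        rw [hpush_r y]
        have := mul_nonneg h1t.le (hu_nonneg y)
        have := mul_nonneg ht0.le (hg_nonneg y)
        linarith
      have h := neg_mul_log_le hu0 hv
      have e : (-Real.log (u y) - 1) * (push G r y - u y)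
          = t * ((-Real.log (u y) - 1) * (g y - u y)) := by
        rw [hpush_r y]; ring
      linarith [h, e.le, e.ge]
    have hsplit : ∑ y, push G r y * Real.log (push G r y)
        = ∑ y ∈ A, push G r y * Real.log (push G r y)
          + ∑ y ∈ B, push G r y * Real.log (push G r y) := by
      rw [hA_def, hB_def]
      exact (Finset.sum_filter_add_sum_filter_not Finset.univ _ _).symm
    have hAsum : ∑ y ∈ A, push G r y * Real.log (push G r y)
        = t * Real.log t * α + t * K := by
      rw [Finset.sum_congr rfl hA_term, Finset.sum_add_distrib, ← Finset.mul_sum,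
        ← Finset.mul_sum, hα_def, hK_def]
    have hBsum : -∑ y ∈ B, push G r y * Real.log (push G r y)
        ≤ -(∑ y ∈ B, u y * Real.log (u y)) + t * CB := by
      rw [← Finset.sum_neg_distrib]
      calc ∑ y ∈ B, -(push G r y * Real.log (push G r y))
          ≤ ∑ y ∈ B, (-(u y * Real.log (u y)) + t * ((-Real.log (u y) - 1) * (g y - u y))) :=
            Finset.sum_le_sum hB_term
        _ = -(∑ y ∈ B, u y * Real.log (u y)) + t * CB := by
            rw [Finset.sum_add_distrib, ← Finset.mul_sum, ← Finset.sum_neg_distrib, hCB_def]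
    have hEntu : Ent u = -(∑ y ∈ B, u y * Real.log (u y)) := by
      show -∑ y, u y * Real.log (u y) = _
      have h0 : ∑ y ∈ A, u y * Real.log (u y) = 0 := by
        apply Finset.sum_eq_zero
        intro y hy
        have := (Finset.mem_filter.mp (show y ∈ Finset.univ.filter (fun y => u y = 0) from hy)).2
        rw [this]; simp
      have := hsplit  -- not needed, redo split for u
      have hsplit' : ∑ y, u y * Real.log (u y)
          = ∑ y ∈ A, u y * Real.log (u y) + ∑ y ∈ B, u y * Real.log (u y) := by
        rw [hA_def, hB_def]
        exact (Finset.sum_filter_add_sum_filter_not Finset.univ _ _).symm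
      rw [hsplit', h0, zero_add]
    show -∑ y, push G r y * Real.log (push G r y) ≤ _
    rw [hsplit, hAsum, hEntu]
    linarith [hBsum]
  -- final assembly
  have hlog : (1 - α) * Real.log t ≤ -((-K + CB + Ent q + f a - E) + 1) := by
    have hβ : 0 < 1 - α := by linarith
    have h1 : t ≤ Real.exp (-((-K + CB + Ent q + f a - E)+1)/(1-α)) := min_le_right _ _
    have h2 : Real.log t ≤ -((-K + CB + Ent q + f a - E)+1)/(1-α) := by
      have := Real.log_le_log ht0 h1
      rwa [Real.log_exp] at this
    calc (1-α) * Real.log t ≤ (1-α) * (-((-K + CB + Ent q + f a - E)+1)/(1-α)) :=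
          mul_le_mul_of_nonneg_left h2 hβ.le
      _ = -((-K + CB + Ent q + f a - E)+1) := by field_simp
  have hcr : cost G f r = Ent (push G r) - Ent r + ∑ x, r x * f x := rfl
  have hcq : cost G f q = Ent u - Ent q + E := rfl
  have hfin : cost G f r ≤ cost G f q - t := by
    have hlg : Real.log (1-t) ≤ 0 := Real.log_nonpos (by linarith) (by linarith)
    have h1 : (1-t) * Real.log (1-t) ≤ 0 := mul_nonpos_of_nonneg_of_nonpos h1t.le hlg
    have h2 : t * ((1-α) * Real.log t + (-K + CB + Ent q + f a - E)) ≤ t * (-1) :=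
      mul_le_mul_of_nonneg_left (by linarith) ht0.le
    rw [hcr, hcq, hEntr, hrf]
    nlinarith [hEntpush, h1, h2]
  have := hmin r hr_dist hr_supp
  linarith

/-- any minimizer of the cost over distributions supported in a
single island `c` has full support on `c`. -/
theorem island_minimizer_full_support {X : Type*} [Fintype X]
    (G : X → X → ℝ) (f : X → ℝ) (hG : isStoch G)
    (c : Set X) (hc : IsIsland G c)
    (q : X → ℝ) (hq : isDist q) (hsupp : ∀ x, q x ≠ 0 → x ∈ c)
    (hmin : ∀ r, isDist r → (∀ x, r x ≠ 0 → x ∈ c) → cost G f q ≤ cost G f r) :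
    ∀ x ∈ c, 0 < q x := by
  classical
  obtain ⟨x₀, hcx⟩ := hc
  have hb : ∃ b, 0 < q b := by
    by_contra h
    push_neg at h
    have hz : ∀ x ∈ Finset.univ, q x = 0 := fun x _ => le_antisymm (h x) (hq.1 x)
    have h2 := hq.2
    rw [Finset.sum_eq_zero hz] at h2
    norm_num at h2
  obtain ⟨b, hbq⟩ := hb
  have hbc : b ∈ c := hsupp b (ne_of_gt hbq)
  have memiff : ∀ {x y : X}, Relation.EqvGen (islandRel G) x y → (x ∈ c ↔ y ∈ c) := by
    intro x y h
    rw [hcx]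
    simp only [Set.mem_setOf_eq]
    exact ⟨fun hx => Relation.EqvGen.trans _ _ _ (Relation.EqvGen.symm _ _ h) hx,
      fun hy => Relation.EqvGen.trans _ _ _ h hy⟩
  have hpos : ∀ (w z : X), 0 < G z w → 0 < q w → 0 < push G q z := by
    intro w z h1 h2
    have hle : G z w * q w ≤ push G q z :=
      Finset.single_le_sum (fun x _ => mul_nonneg (hG.1 z x) (hq.1 x)) (Finset.mem_univ w)
    exact lt_of_lt_of_le (mul_pos h1 h2) hle
  have main : ∀ x y : X, Relation.EqvGen (islandRel G) x y →
      ((x ∈ c ∧ 0 < q x) ↔ (y ∈ c ∧ 0 < q y)) := by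
    intro x y h
    induction h with
    | rel x y hxy =>
        have hmem := memiff (Relation.EqvGen.rel _ _ hxy)
        obtain ⟨z, hz1, hz2⟩ := hxy
        constructor
        · rintro ⟨hxc, hxq⟩
          exact ⟨hmem.mp hxc,
            key_lemma G f hG c q hq hsupp hmin y (hmem.mp hxc) z hz2 (hpos x z hz1 hxq)⟩
        · rintro ⟨hyc, hyq⟩
          exact ⟨hmem.mpr hyc,
            key_lemma G f hG c q hq hsupp hmin x (hmem.mpr hyc) z hz1 (hpos y z hz2 hyq)⟩
    | refl x => exact Iff.rfl
    | symm x y h ih => exact ih.symm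
    | trans x y z h1 h2 ih1 ih2 => exact ih1.trans ih2
  intro x hx
  have hxb : Relation.EqvGen (islandRel G) x b := by
    have h1 : Relation.EqvGen (islandRel G) x x₀ := by rw [hcx] at hx; exact hx
    have h2 : Relation.EqvGen (islandRel G) b x₀ := by rw [hcx] at hbc; exact hbc
    exact Relation.EqvGen.trans _ _ _ h1 (Relation.EqvGen.symm _ _ h2)
  exact ((main x b hxb).mpr ⟨hbc, hbq⟩).2
end

section
/- KL divergence drop decomposes over islands: for any distributions p, r on X, D(p‖r) − D(Gp‖Gr) = Σ_{c∈L(G)} p(c) [D(p^c‖r^c) − D(Gp^c‖Gr^c)]. -/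
/-!
Split the sum `D(p‖r)` by islands, and the sum `D(Gp‖Gr)` by the island of the inputs feeding
each output; this is well defined because two inputs sharing an output lie in one island. As `G`
is stochastic and never connects two islands, island `c` carries mass `p(c)` both before and after
`G`. Rescaling a block of terms to the conditional distributions gives
`Σ_{x∈c} p log (p/r) = p(c) D(p^c‖r^c) + p(c) log (p(c)/r(c))`, and the same with `Gp, Gr` over
the outputs of `c`; the two correction terms `p(c) log (p(c)/r(c))` cancel in the difference.
-/

open Finset Real

open scoped Classical

/-- The island decomposition: the setoid generated by `islandRel G`. -/
def islandSetoid {X : Type*} [Fintype X] (G : X → X → ℝ) : Setoid X :=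
  Relation.EqvGen.setoid (islandRel G)

/-- The probability mass of `p` within the island `c`. -/
noncomputable def islandMass {X : Type*} [Fintype X] (G : X → X → ℝ) (p : X → ℝ)
    (c : Quotient (islandSetoid G)) : ℝ :=
  ∑ x ∈ Finset.univ.filter (fun x => Quotient.mk (islandSetoid G) x = c), p x

/-- The conditional distribution of `p` within the island `c`
(zero outside `c`, and zero everywhere when `p(c) = 0`, by the `x/0 = 0` convention). -/
noncomputable def islandCond {X : Type*} [Fintype X] (G : X → X → ℝ) (p : X → ℝ)
    (c : Quotient (islandSetoid G)) : X → ℝ :=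
  fun x => if Quotient.mk (islandSetoid G) x = c then p x / islandMass G p c else 0

section Rescale

variable {ι : Type*}

theorem KL_eq_sum_of_eq_zero [Fintype ι] {p : ι → ℝ} (q : ι → ℝ) (s : Finset ι)
    (hp : ∀ i ∉ s, p i = 0) : KL p q = ∑ i ∈ s, p i * log (p i / q i) :=
  (Finset.sum_subset (subset_univ s) fun i _ hi => by rw [hp i hi, zero_mul]).symm

theorem mul_log_div_eq_rescale {a b m n : ℝ} (hab : b = 0 → a = 0) (hm : m ≠ 0) (hn : n ≠ 0) :
    a * log (a / b) = m * (a / m * log (a / m / (b / n))) + a * (log m - log n) := by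
  rcases eq_or_ne a 0 with rfl | ha
  · simp
  have hb : b ≠ 0 := mt hab ha
  have hsplit : a / m / (b / n) = a / b * (n / m) := by field_simp
  rw [hsplit, log_mul (div_ne_zero ha hb) (div_ne_zero hn hm), log_div hn hm]
  field_simp
  ring

theorem sum_mul_log_div_eq_rescale (s : Finset ι) {a b : ι → ℝ}
    (hab : ∀ i ∈ s, b i = 0 → a i = 0) {m n : ℝ} (hm : m ≠ 0) (hn : n ≠ 0) :
    ∑ i ∈ s, a i * log (a i / b i) =
      m * ∑ i ∈ s, a i / m * log (a i / m / (b i / n)) + (∑ i ∈ s, a i) * (log m - log n) := by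
  rw [Finset.mul_sum, Finset.sum_mul, ← Finset.sum_add_distrib]
  exact Finset.sum_congr rfl fun i hi => mul_log_div_eq_rescale (hab i hi) hm hn

end Rescale

section Islands

variable {X : Type*} [Fintype X] {G : X → X → ℝ}

noncomputable def island (G : X → X → ℝ) (c : Quotient (islandSetoid G)) : Finset X :=
  univ.filter fun x => Quotient.mk (islandSetoid G) x = c

theorem islandMass_eq_sum_island (p : X → ℝ) (c : Quotient (islandSetoid G)) :
    islandMass G p c = ∑ x ∈ island G c, p x :=
  rfl

theorem mem_island {c : Quotient (islandSetoid G)} {x : X} :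
    x ∈ island G c ↔ Quotient.mk (islandSetoid G) x = c := by
  simp [island]

/-- All inputs reaching the output `y` lie in one island; an output reached by no input gets
the junk island `⟦y⟧`. -/
noncomputable def outIsland (G : X → X → ℝ) (y : X) : Quotient (islandSetoid G) :=
  if h : ∃ x, 0 < G y x then Quotient.mk _ h.choose else Quotient.mk _ y

noncomputable def outFiber (G : X → X → ℝ) (c : Quotient (islandSetoid G)) : Finset X :=
  univ.filter fun y => outIsland G y = c

theorem mem_outFiber {c : Quotient (islandSetoid G)} {y : X} :
    y ∈ outFiber G c ↔ outIsland G y = c := by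
  simp [outFiber]

theorem outIsland_eq_of_pos {y x : X} (hx : 0 < G y x) :
    outIsland G y = Quotient.mk (islandSetoid G) x := by
  have h : ∃ x, 0 < G y x := ⟨x, hx⟩
  rw [outIsland, dif_pos h]
  exact Quotient.sound (Relation.EqvGen.rel _ _ ⟨y, h.choose_spec, hx⟩)

theorem eq_zero_of_outIsland_ne (hG : ∀ y x, 0 ≤ G y x) {y x : X}
    (h : outIsland G y ≠ Quotient.mk (islandSetoid G) x) : G y x = 0 :=
  ((hG y x).lt_or_eq.resolve_left fun hpos => h (outIsland_eq_of_pos hpos)).symm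

theorem push_eq_sum_island (hG : ∀ y x, 0 ≤ G y x) (p : X → ℝ) {c : Quotient (islandSetoid G)}
    {y : X} (hy : outIsland G y = c) : push G p y = ∑ x ∈ island G c, G y x * p x := by
  refine (Finset.sum_subset (subset_univ _) fun x _ hx => ?_).symm
  rw [eq_zero_of_outIsland_ne hG (hy.trans_ne (Ne.symm (mt mem_island.mpr hx))), zero_mul]

theorem push_islandCond (hG : ∀ y x, 0 ≤ G y x) (p : X → ℝ) (c : Quotient (islandSetoid G))
    (y : X) : push G (islandCond G p c) y =
      if outIsland G y = c then push G p y / islandMass G p c else 0 := by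
  have hcond :
      push G (islandCond G p c) y = (∑ x ∈ island G c, G y x * p x) / islandMass G p c := by
    simp only [push, islandCond, mul_ite, mul_zero, Finset.sum_div, island, Finset.sum_filter,
      ite_div, zero_div, mul_div_assoc]
  split_ifs with hy
  · rw [hcond, push_eq_sum_island hG p hy]
  · rw [hcond, Finset.sum_eq_zero fun x hx => ?_, zero_div]
    rw [eq_zero_of_outIsland_ne hG (by rwa [mem_island.mp hx]), zero_mul]

/-- `G` is stochastic and connects an island only to its own outputs, so no mass leaves it. -/
theorem sum_outFiber_push (hG : isStoch G) (p : X → ℝ) (c : Quotient (islandSetoid G)) :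
    ∑ y ∈ outFiber G c, push G p y = islandMass G p c := by
  have hcol : ∀ x ∈ island G c, ∑ y ∈ outFiber G c, G y x = 1 := fun x hx => by
    rw [← hG.2 x]
    refine Finset.sum_subset (subset_univ _) fun y _ hy => eq_zero_of_outIsland_ne hG.1 ?_
    rw [mem_island.mp hx]
    exact mt mem_outFiber.mpr hy
  calc ∑ y ∈ outFiber G c, push G p y
      = ∑ y ∈ outFiber G c, ∑ x ∈ island G c, G y x * p x :=
        Finset.sum_congr rfl fun y hy => push_eq_sum_island hG.1 p (mem_outFiber.mp hy)
    _ = ∑ x ∈ island G c, (∑ y ∈ outFiber G c, G y x) * p x := by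
        rw [Finset.sum_comm]
        simp only [Finset.sum_mul]
    _ = islandMass G p c := by
        rw [islandMass_eq_sum_island]
        exact Finset.sum_congr rfl fun x hx => by rw [hcol x hx, one_mul]

theorem KL_islandCond (p r : X → ℝ) (c : Quotient (islandSetoid G)) :
    KL (islandCond G p c) (islandCond G r c) =
      ∑ x ∈ island G c, p x / islandMass G p c *
        log (p x / islandMass G p c / (r x / islandMass G r c)) := by
  rw [KL_eq_sum_of_eq_zero (p := islandCond G p c) _ (island G c) fun x hx =>
    if_neg (mt mem_island.mpr hx)]
  refine Finset.sum_congr rfl fun x hx => ?_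
  simp only [islandCond, if_pos (mem_island.mp hx)]

theorem KL_push_islandCond (hG : ∀ y x, 0 ≤ G y x) (p r : X → ℝ)
    (c : Quotient (islandSetoid G)) :
    KL (push G (islandCond G p c)) (push G (islandCond G r c)) =
      ∑ y ∈ outFiber G c, push G p y / islandMass G p c *
        log (push G p y / islandMass G p c / (push G r y / islandMass G r c)) := by
  rw [KL_eq_sum_of_eq_zero (p := push G (islandCond G p c)) _ (outFiber G c) fun y hy => by
    rw [push_islandCond hG, if_neg (mt mem_outFiber.mpr hy)]]
  refine Finset.sum_congr rfl fun y hy => ?_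
  simp only [push_islandCond hG, if_pos (mem_outFiber.mp hy)]

theorem island_KL_drop (hG : isStoch G) {p r : X → ℝ} (hp : ∀ x, 0 ≤ p x)
    {c : Quotient (islandSetoid G)} (hmass : 0 < islandMass G p c → 0 < islandMass G r c)
    (hac : ∀ x, r x = 0 → p x = 0) (hacG : ∀ y, push G r y = 0 → push G p y = 0) :
    ∑ x ∈ island G c, p x * log (p x / r x)
        - ∑ y ∈ outFiber G c, push G p y * log (push G p y / push G r y) =
      islandMass G p c *
        (KL (islandCond G p c) (islandCond G r c)
          - KL (push G (islandCond G p c)) (push G (islandCond G r c))) := by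
  have hmass_nonneg : 0 ≤ islandMass G p c := Finset.sum_nonneg fun x _ => hp x
  rcases hmass_nonneg.lt_or_eq with hpos | hzero
  · have hm := hpos.ne'
    have hn := (hmass hpos).ne'
    rw [sum_mul_log_div_eq_rescale _ (fun x _ => hac x) hm hn,
      sum_mul_log_div_eq_rescale _ (fun y _ => hacG y) hm hn, sum_outFiber_push hG,
      KL_islandCond, KL_push_islandCond hG.1, ← islandMass_eq_sum_island p c]
    ring
  · have hp0 : ∀ x ∈ island G c, p x = 0 :=
      (Finset.sum_eq_zero_iff_of_nonneg fun x _ => hp x).mp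
        (islandMass_eq_sum_island p c ▸ hzero.symm)
    have hGp0 : ∀ y ∈ outFiber G c, push G p y = 0 := fun y hy => by
      rw [push_eq_sum_island hG.1 p (mem_outFiber.mp hy)]
      exact Finset.sum_eq_zero fun x hx => by rw [hp0 x hx, mul_zero]
    rw [Finset.sum_eq_zero fun x hx => by rw [hp0 x hx, zero_mul],
      Finset.sum_eq_zero fun y hy => by rw [hGp0 y hy, zero_mul], ← hzero, zero_mul, sub_zero]

end Islands

theorem kl_drop_island_decomposition_general {X : Type*} [Fintype X]
    (G : X → X → ℝ) (hG : isStoch G)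
    (p r : X → ℝ) (hp : isDist p)
    (hmass : ∀ c : Quotient (islandSetoid G), 0 < islandMass G p c → 0 < islandMass G r c)
    (hac : ∀ x, r x = 0 → p x = 0)
    (hacG : ∀ y, push G r y = 0 → push G p y = 0) :
    KL p r - KL (push G p) (push G r) =
      ∑ c : Quotient (islandSetoid G),
        islandMass G p c *
          (KL (islandCond G p c) (islandCond G r c)
            - KL (push G (islandCond G p c)) (push G (islandCond G r c))) := by
  have hsplit : KL p r = ∑ c, ∑ x ∈ island G c, p x * log (p x / r x) :=
    (Finset.sum_fiberwise univ (fun x => Quotient.mk (islandSetoid G) x) _).symm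
  have hsplitG : KL (push G p) (push G r) =
      ∑ c, ∑ y ∈ outFiber G c, push G p y * log (push G p y / push G r y) :=
    (Finset.sum_fiberwise univ (outIsland G) _).symm
  rw [hsplit, hsplitG, ← Finset.sum_sub_distrib]
  exact Finset.sum_congr rfl fun c _ => island_KL_drop hG hp.1 (hmass c) hac hacG

/-- the KL-divergence drop decomposes over islands:
`D(p‖r) − D(Gp‖Gr) = Σ_c p(c) [D(p^c‖r^c) − D(Gp^c‖Gr^c)]`
(under absolute-continuity assumptions ensuring all divergences are finite). -/
theorem kl_drop_island_decomposition {X : Type*} [Fintype X]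
    (G : X → X → ℝ) (hG : isStoch G)
    (p r : X → ℝ) (hp : isDist p) (hr : isDist r)
    (hmass : ∀ c : Quotient (islandSetoid G), 0 < islandMass G p c → 0 < islandMass G r c)
    (hac : ∀ x, r x = 0 → p x = 0)
    (hacG : ∀ y, push G r y = 0 → push G p y = 0) :
    KL p r - KL (push G p) (push G r) =
      ∑ c : Quotient (islandSetoid G),
        islandMass G p c *
          (KL (islandCond G p c) (islandCond G r c)
            - KL (push G (islandCond G p c)) (push G (islandCond G r c))) :=
  kl_drop_island_decomposition_general G hG p r hp hmass hac hacG
end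

section
/- If two distributions p and q both minimize C(r) = S(Gr) − S(r) + E_r[f] over distributions supported in an island c, then p(x)/q(x) is constant on c, hence p = q. -/
open Finset Real

lemma aux_log_div (a b : ℝ) (h : a ≠ 0 → b ≠ 0) :
    a * Real.log (a / b) = a * Real.log a - a * Real.log b := by
  by_cases ha : a = 0
  · simp [ha]
  · rw [Real.log_div ha (h ha)]; ring

lemma aux_key (a b : ℝ) (ha : 0 ≤ a) (hb : 0 ≤ b) (h : a ≠ 0 → b ≠ 0) :
    a - b ≤ a * Real.log (a / b) ∧ (a * Real.log (a / b) = a - b → a = b) := by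
  by_cases ha0 : a = 0
  · subst ha0
    constructor
    · simpa using hb
    · intro h
      have hb0 : (0:ℝ) = 0 - b := by simpa using h
      linarith
  · have hb0 : b ≠ 0 := h ha0
    have hap : 0 < a := lt_of_le_of_ne ha (Ne.symm ha0)
    have hbp : 0 < b := lt_of_le_of_ne hb (Ne.symm hb0)
    have hlogsym : Real.log (a / b) = -Real.log (b / a) := by
      rw [Real.log_div ha0 hb0, Real.log_div hb0 ha0]; ring
    constructor
    · have hlog : Real.log (b / a) ≤ b / a - 1 :=
        Real.log_le_sub_one_of_pos (div_pos hbp hap)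
      have h1 : 1 - b / a ≤ Real.log (a / b) := by rw [hlogsym]; linarith
      have h2 : a * (1 - b / a) ≤ a * Real.log (a / b) :=
        mul_le_mul_of_nonneg_left h1 ha
      have h3 : a * (1 - b / a) = a - b := by field_simp
      linarith
    · intro heq
      by_contra hne
      have hba : b / a ≠ 1 := by
        intro hh
        exact hne ((div_eq_one_iff_eq (ne_of_gt hap)).1 hh).symm
      have hlog : Real.log (b / a) < b / a - 1 :=
        Real.log_lt_sub_one_of_pos (div_pos hbp hap) hba
      have h1 : 1 - b / a < Real.log (a / b) := by rw [hlogsym]; linarith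
      have h2 : a * (1 - b / a) < a * Real.log (a / b) :=
        (mul_lt_mul_iff_right₀ hap).2 h1
      have h3 : a * (1 - b / a) = a - b := by field_simp
      linarith

/-- Data processing inequality for KL, with the equality condition. -/
lemma dpi {X : Type*} [Fintype X] (G : X → X → ℝ) (hG : isStoch G)
    (r s : X → ℝ) (hr : ∀ x, 0 ≤ r x) (hs : ∀ x, 0 ≤ s x)
    (hrs : ∀ x, r x ≠ 0 → s x ≠ 0) :
    KL (push G r) (push G s) ≤ KL r s ∧
      (KL r s ≤ KL (push G r) (push G s) →
        ∀ x y, 0 < G y x * r x → r x * push G s y = s x * push G r y) := by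
  have hGr : ∀ y, 0 ≤ push G r y :=
    fun y => Finset.sum_nonneg (fun x _ => mul_nonneg (hG.1 y x) (hr x))
  have hGs : ∀ y, 0 ≤ push G s y :=
    fun y => Finset.sum_nonneg (fun x _ => mul_nonneg (hG.1 y x) (hs x))
  have hsingler : ∀ y x, G y x * r x ≤ push G r y := fun y x =>
    Finset.single_le_sum (fun x' _ => mul_nonneg (hG.1 y x') (hr x')) (Finset.mem_univ x)
  have hsingles : ∀ y x, G y x * s x ≤ push G s y := fun y x =>
    Finset.single_le_sum (fun x' _ => mul_nonneg (hG.1 y x') (hs x')) (Finset.mem_univ x)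
  have hGrs : ∀ y, push G s y = 0 → push G r y = 0 := by
    intro y hy
    have h0 : ∀ x ∈ Finset.univ, G y x * s x = 0 :=
      (Finset.sum_eq_zero_iff_of_nonneg
        (fun x _ => mul_nonneg (hG.1 y x) (hs x))).1 hy
    apply Finset.sum_eq_zero
    intro x _
    by_cases hrx : r x = 0
    · simp [hrx]
    · have hsx : s x ≠ 0 := hrs x hrx
      have := h0 x (Finset.mem_univ x)
      have hGyx : G y x = 0 := by
        rcases mul_eq_zero.1 this with h | h
        · exact h
        · exact absurd h hsx
      simp [hGyx]
  -- pointwise inequality and equality condition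
  have hpt : ∀ y x,
      (G y x * r x - G y x * s x * (push G r y / push G s y) ≤
        G y x * r x * (Real.log (r x / s x) - Real.log (push G r y / push G s y))) ∧
      (G y x * r x * (Real.log (r x / s x) - Real.log (push G r y / push G s y)) =
          G y x * r x - G y x * s x * (push G r y / push G s y) →
        G y x * r x = G y x * s x * (push G r y / push G s y)) := by
    intro y x
    by_cases ha : G y x * r x = 0
    · have hbnn : 0 ≤ G y x * s x * (push G r y / push G s y) :=
        mul_nonneg (mul_nonneg (hG.1 y x) (hs x)) (div_nonneg (hGr y) (hGs y))
      rw [ha]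
      constructor
      · simp only [zero_mul]; linarith
      · intro h
        simp only [zero_mul] at h
        linarith
    · have hGyx : G y x ≠ 0 := fun h => ha (by simp [h])
      have hrx : r x ≠ 0 := fun h => ha (by simp [h])
      have hGyxp : 0 < G y x := lt_of_le_of_ne (hG.1 y x) (Ne.symm hGyx)
      have hrxp : 0 < r x := lt_of_le_of_ne (hr x) (Ne.symm hrx)
      have hsxp : 0 < s x := lt_of_le_of_ne (hs x) (Ne.symm (hrs x hrx))
      have hGry : 0 < push G r y :=
        lt_of_lt_of_le (mul_pos hGyxp hrxp) (hsingler y x)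
      have hGsy : 0 < push G s y :=
        lt_of_lt_of_le (mul_pos hGyxp hsxp) (hsingles y x)
      have hbpos : 0 < G y x * s x * (push G r y / push G s y) :=
        mul_pos (mul_pos hGyxp hsxp) (div_pos hGry hGsy)
      have hlog : Real.log (r x / s x) - Real.log (push G r y / push G s y) =
          Real.log ((G y x * r x) / (G y x * s x * (push G r y / push G s y))) := by
        have hdiv : (G y x * r x) / (G y x * s x * (push G r y / push G s y)) =
            (r x / s x) / (push G r y / push G s y) := by
          field_simp
        rw [hdiv, Real.log_div (ne_of_gt (div_pos hrxp hsxp))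
          (ne_of_gt (div_pos hGry hGsy))]
      rw [hlog]
      exact aux_key _ _ (le_of_lt (mul_pos hGyxp hrxp)) (le_of_lt hbpos)
        (fun _ => ne_of_gt hbpos)
  -- sum of the `b`'s over x
  have hsumb : ∀ y, ∑ x, G y x * s x * (push G r y / push G s y) = push G r y := by
    intro y
    rw [← Finset.sum_mul]
    have hss : ∑ x, G y x * s x = push G s y := rfl
    rw [hss]
    by_cases hGsy : push G s y = 0
    · rw [hGsy, hGrs y hGsy]; simp
    · field_simp
  have hTa : ∑ y, ∑ x, (G y x * r x - G y x * s x * (push G r y / push G s y)) = 0 := by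
    apply Finset.sum_eq_zero
    intro y _
    rw [Finset.sum_sub_distrib, hsumb y]
    have hss : ∑ x, G y x * r x = push G r y := rfl
    rw [hss, sub_self]
  -- KL rewrites as double sums
  have hKL1 : KL r s = ∑ y, ∑ x, G y x * r x * Real.log (r x / s x) := by
    rw [Finset.sum_comm]
    unfold KL
    apply Finset.sum_congr rfl
    intro x _
    have : ∑ y, G y x * r x * Real.log (r x / s x) =
        (∑ y, G y x) * (r x * Real.log (r x / s x)) := by
      rw [Finset.sum_mul]
      exact Finset.sum_congr rfl (fun y _ => (mul_assoc _ _ _))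
    rw [this, hG.2 x, one_mul]
  have hKL2 : KL (push G r) (push G s) =
      ∑ y, ∑ x, G y x * r x * Real.log (push G r y / push G s y) := by
    unfold KL
    apply Finset.sum_congr rfl
    intro y _
    rw [show push G r y = ∑ x, G y x * r x from rfl, Finset.sum_mul]
  have hdiff : KL r s - KL (push G r) (push G s) =
      ∑ y, ∑ x, G y x * r x *
        (Real.log (r x / s x) - Real.log (push G r y / push G s y)) := by
    rw [hKL1, hKL2, ← Finset.sum_sub_distrib]
    apply Finset.sum_congr rfl
    intro y _
    rw [← Finset.sum_sub_distrib]
    exact Finset.sum_congr rfl (fun x _ => by ring)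
  have hmono : ∀ y ∈ Finset.univ,
      ∑ x, (G y x * r x - G y x * s x * (push G r y / push G s y)) ≤
      ∑ x, G y x * r x *
        (Real.log (r x / s x) - Real.log (push G r y / push G s y)) :=
    fun y _ => Finset.sum_le_sum (fun x _ => (hpt y x).1)
  have hge : 0 ≤ KL r s - KL (push G r) (push G s) := by
    rw [hdiff, ← hTa]
    exact Finset.sum_le_sum hmono
  constructor
  · linarith
  · intro hle x y hpos
    have heq2 : ∑ y, ∑ x, (G y x * r x - G y x * s x * (push G r y / push G s y)) =
        ∑ y, ∑ x, G y x * r x *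
          (Real.log (r x / s x) - Real.log (push G r y / push G s y)) := by
      apply le_antisymm (Finset.sum_le_sum hmono)
      rw [hTa, ← hdiff]
      linarith
    have h3 := (Finset.sum_eq_sum_iff_of_le hmono).1 heq2 y (Finset.mem_univ y)
    have h4 := (Finset.sum_eq_sum_iff_of_le
      (fun x _ => (hpt y x).1)).1 h3 x (Finset.mem_univ x)
    have h5 : G y x * r x = G y x * s x * (push G r y / push G s y) :=
      (hpt y x).2 h4.symm
    have hGyxp : 0 < G y x := by
      rcases (mul_pos_iff.1 hpos) with ⟨h, _⟩ | ⟨h, _⟩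
      · exact h
      · exact absurd (hG.1 y x) (not_le.2 h)
    have hrxp : 0 < r x := by
      rcases (mul_pos_iff.1 hpos) with ⟨_, h⟩ | ⟨_, h⟩
      · exact h
      · exact absurd (hr x) (not_le.2 h)
    have hsxp : 0 < s x := lt_of_le_of_ne (hs x) (Ne.symm (hrs x (ne_of_gt hrxp)))
    have hGsy : 0 < push G s y :=
      lt_of_lt_of_le (mul_pos hGyxp hsxp) (hsingles y x)
    have h6 : r x = s x * (push G r y / push G s y) := by
      rw [mul_assoc] at h5
      exact mul_left_cancel₀ (ne_of_gt hGyxp) h5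
    rw [h6]
    field_simp

/-- if `p` and `q` both minimize the cost over distributions
supported in an island `c` (and have full support on `c`), then the ratio
`p(x)/q(x)` is constant on `c`, and hence `p = q`. -/
theorem island_minimizers_equal {X : Type*} [Fintype X]
    (G : X → X → ℝ) (f : X → ℝ) (hG : isStoch G)
    (c : Set X) (hc : IsIsland G c)
    (p q : X → ℝ) (hp : isDist p) (hq : isDist q)
    (hps : ∀ x, p x ≠ 0 → x ∈ c) (hqs : ∀ x, q x ≠ 0 → x ∈ c)
    (hpfull : ∀ x ∈ c, 0 < p x) (hqfull : ∀ x ∈ c, 0 < q x)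
    (hpmin : ∀ r, isDist r → (∀ x, r x ≠ 0 → x ∈ c) → cost G f p ≤ cost G f r)
    (hqmin : ∀ r, isDist r → (∀ x, r x ≠ 0 → x ∈ c) → cost G f q ≤ cost G f r) :
    (∃ α : ℝ, ∀ x ∈ c, p x = α * q x) ∧ p = q := by
  obtain ⟨x₀, hcdef⟩ := hc
  set m : X → ℝ := fun x => (p x + q x) / 2 with hmdef
  have hmx : ∀ x, m x = (p x + q x) / 2 := fun x => rfl
  have hmnn : ∀ x, 0 ≤ m x := fun x => by
    have := hp.1 x; have := hq.1 x; rw [hmx]; linarith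
  have hmdist : isDist m := by
    refine ⟨hmnn, ?_⟩
    have hsm : ∑ x, m x = (∑ x, p x + ∑ x, q x) / 2 := by
      rw [← Finset.sum_add_distrib, ← Finset.sum_div]
    rw [hsm, hp.2, hq.2]; norm_num
  have hpc0 : ∀ x, x ∉ c → p x = 0 := fun x hx => by
    by_contra h; exact hx (hps x h)
  have hqc0 : ∀ x, x ∉ c → q x = 0 := fun x hx => by
    by_contra h; exact hx (hqs x h)
  have hms : ∀ x, m x ≠ 0 → x ∈ c := by
    intro x hx
    by_contra h
    exact hx (by rw [hmx, hpc0 x h, hqc0 x h]; norm_num)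
  have hmpos : ∀ x ∈ c, 0 < m x := fun x hx => by
    have := hpfull x hx; have := hq.1 x; rw [hmx]; linarith
  have hpm0 : ∀ x, p x ≠ 0 → m x ≠ 0 := fun x hx => ne_of_gt (hmpos x (hps x hx))
  have hqm0 : ∀ x, q x ≠ 0 → m x ≠ 0 := fun x hx => ne_of_gt (hmpos x (hqs x hx))
  have hCpq : cost G f p = cost G f q := le_antisymm (hpmin q hq hqs) (hqmin p hp hps)
  have hCm : cost G f p ≤ cost G f m := hpmin m hmdist hms
  have hpushm : ∀ y, push G m y = (push G p y + push G q y) / 2 := by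
    intro y
    unfold push
    rw [← Finset.sum_add_distrib, Finset.sum_div]
    exact Finset.sum_congr rfl (fun x _ => by rw [hmx]; ring)
  have hGp_nn : ∀ y, 0 ≤ push G p y := fun y =>
    Finset.sum_nonneg fun x _ => mul_nonneg (hG.1 y x) (hp.1 x)
  have hGq_nn : ∀ y, 0 ≤ push G q y := fun y =>
    Finset.sum_nonneg fun x _ => mul_nonneg (hG.1 y x) (hq.1 x)
  have hGpm0 : ∀ y, push G p y ≠ 0 → push G m y ≠ 0 := by
    intro y hy
    have h1 : 0 < push G p y := lt_of_le_of_ne (hGp_nn y) (Ne.symm hy)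
    have h2 := hGq_nn y
    exact ne_of_gt (by rw [hpushm y]; linarith)
  have hGqm0 : ∀ y, push G q y ≠ 0 → push G m y ≠ 0 := by
    intro y hy
    have h1 : 0 < push G q y := lt_of_le_of_ne (hGq_nn y) (Ne.symm hy)
    have h2 := hGp_nn y
    exact ne_of_gt (by rw [hpushm y]; linarith)
  -- split KL into entropy-like sums
  have hsplit : ∀ (r s : X → ℝ), (∀ x, r x ≠ 0 → s x ≠ 0) →
      KL r s = ∑ x, r x * Real.log (r x) - ∑ x, r x * Real.log (s x) := by
    intro r s hr0
    unfold KL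
    rw [← Finset.sum_sub_distrib]
    exact Finset.sum_congr rfl fun x _ => aux_log_div _ _ (hr0 x)
  have e3 : ∑ x, p x * Real.log (m x) + ∑ x, q x * Real.log (m x)
      = 2 * ∑ x, m x * Real.log (m x) := by
    rw [← Finset.sum_add_distrib, Finset.mul_sum]
    exact Finset.sum_congr rfl fun x _ => by rw [hmx]; ring
  have hX : KL p m + KL q m = 2 * Ent m - Ent p - Ent q := by
    rw [hsplit p m hpm0, hsplit q m hqm0]
    unfold Ent
    linarith [e3]
  have e3' : ∑ y, push G p y * Real.log (push G m y)
        + ∑ y, push G q y * Real.log (push G m y)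
      = 2 * ∑ y, push G m y * Real.log (push G m y) := by
    rw [← Finset.sum_add_distrib, Finset.mul_sum]
    exact Finset.sum_congr rfl fun y _ => by rw [hpushm y]; ring
  have hY : KL (push G p) (push G m) + KL (push G q) (push G m)
      = 2 * Ent (push G m) - Ent (push G p) - Ent (push G q) := by
    rw [hsplit _ _ hGpm0, hsplit _ _ hGqm0]
    unfold Ent
    linarith [e3']
  have hLin : 2 * ∑ x, m x * f x = ∑ x, p x * f x + ∑ x, q x * f x := by
    rw [Finset.mul_sum, ← Finset.sum_add_distrib]
    exact Finset.sum_congr rfl fun x _ => by rw [hmx]; ring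
  have hid : 2 * cost G f m + (KL p m + KL q m)
      = cost G f p + cost G f q +
        (KL (push G p) (push G m) + KL (push G q) (push G m)) := by
    unfold cost
    linarith [hX, hY, hLin]
  have hdp := dpi G hG p m hp.1 hmnn hpm0
  have hdq := dpi G hG q m hq.1 hmnn hqm0
  have hApA : KL p m ≤ KL (push G p) (push G m) := by
    linarith [hdp.1, hdq.1]
  have hratio := hdp.2 hApA
  -- the ratio p/m is constant along island chains
  have hchain : ∀ x z, Relation.EqvGen (islandRel G) x z → x ∈ c → z ∈ c →
      p x * m z = m x * p z := by
    intro x z h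
    induction h with
    | rel a b hab =>
      intro hac hbc
      obtain ⟨y, hya, hyb⟩ := hab
      have h1 := hratio a y (mul_pos hya (hpfull a hac))
      have h2 := hratio b y (mul_pos hyb (hpfull b hbc))
      have hGmy : 0 < push G m y :=
        lt_of_lt_of_le (mul_pos hya (hmpos a hac))
          (Finset.single_le_sum
            (fun x' _ => mul_nonneg (hG.1 y x') (hmnn x')) (Finset.mem_univ a))
      have key : p a * m b * push G m y = m a * p b * push G m y := by
        calc p a * m b * push G m y = m b * (p a * push G m y) := by ring
        _ = m b * (m a * push G p y) := by rw [h1]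
        _ = m a * (m b * push G p y) := by ring
        _ = m a * (p b * push G m y) := by rw [← h2]
        _ = m a * p b * push G m y := by ring
      exact mul_right_cancel₀ (ne_of_gt hGmy) key
    | refl a => intro _ _; ring
    | symm a b hab ih =>
      intro hbc hac
      have h := ih hac hbc
      linear_combination -h
    | trans a b d hab hbd ih1 ih2 =>
      intro hac hdc
      have hbc : b ∈ c := by
        simp only [hcdef, Set.mem_setOf_eq] at hac ⊢
        exact Relation.EqvGen.trans _ _ _ (Relation.EqvGen.symm _ _ hab) hac
      have e1 := ih1 hac hbc
      have e2 := ih2 hbc hdc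
      have hmb : 0 < m b := hmpos b hbc
      have hpb : 0 < p b := hpfull b hbc
      have key : p a * m d * (m b * p b) = m a * p d * (m b * p b) := by
        calc p a * m d * (m b * p b) = (p a * m b) * (p b * m d) := by ring
        _ = (m a * p b) * (m b * p d) := by rw [e1, e2]
        _ = m a * p d * (m b * p b) := by ring
      exact mul_right_cancel₀ (ne_of_gt (mul_pos hmb hpb)) key
  have hx0c : x₀ ∈ c := by
    simp only [hcdef, Set.mem_setOf_eq]
    exact Relation.EqvGen.refl x₀
  have hratc : ∀ x ∈ c, p x * m x₀ = m x * p x₀ := by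
    intro x hx
    have hxrel : Relation.EqvGen (islandRel G) x x₀ := by
      have hx' := hx
      simp only [hcdef, Set.mem_setOf_eq] at hx'
      exact hx'
    exact hchain x x₀ hxrel hx hx0c
  have hmx₀ : 0 < m x₀ := hmpos x₀ hx0c
  have hpmxall : ∀ x, p x = (p x₀ / m x₀) * m x := by
    intro x
    by_cases hx : x ∈ c
    · have h := hratc x hx
      rw [div_mul_eq_mul_div, eq_div_iff (ne_of_gt hmx₀)]
      linear_combination h
    · have hpz := hpc0 x hx
      have hmz : m x = 0 := by rw [hmx, hpz, hqc0 x hx]; norm_num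
      rw [hpz, hmz, mul_zero]
  have hsum : (1:ℝ) = (p x₀ / m x₀) * 1 := by
    calc (1:ℝ) = ∑ x, p x := hp.2.symm
    _ = ∑ x, (p x₀ / m x₀) * m x := Finset.sum_congr rfl (fun x _ => hpmxall x)
    _ = (p x₀ / m x₀) * ∑ x, m x := by rw [Finset.mul_sum]
    _ = (p x₀ / m x₀) * 1 := by rw [hmdist.2]
  have hα1 : p x₀ / m x₀ = 1 := by linarith
  have hpq : ∀ x, p x = q x := by
    intro x
    have h := hpmxall x
    rw [hα1, one_mul, hmx] at h
    linarith
  exact ⟨⟨1, fun x _ => by rw [hpq x, one_mul]⟩, funext hpq⟩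
end
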